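/- Let n ≥ 2, let π ∈ ℝⁿ satisfy 1ₙᵀπ = 1, let λ > 0, and let S̄ be an (n−1)×n real matrix such that ‖S̄x‖ ≥ λ‖x‖ for every x ∈ ℝⁿ with 1ₙᵀx = 0. Define w = (Iₙ − π1ₙᵀ)(1ₙ/√n), and let S be the n×n matrix whose first n−1 rows are S̄(Iₙ − π1ₙᵀ) and whose last row is 1ₙᵀ. Then for every x ∈ ℝⁿ, ‖Sx‖² ≥ min(n, λ²) · min(1/2, 1/(16‖w‖² + 1)) · ‖x‖². In particular, S is nonsingular and its smallest singular value is bounded below by a positive constant depending only on n, λ and ‖w‖. -/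

import Mathlib

/-!
Write `c = 1ₙᵀx` and `x = y + (c/n)1ₙ` with `1ₙᵀy = 0`, so `‖x‖² = ‖y‖² + c²/n`. The projection
`u = (Iₙ - π1ₙᵀ)x` is centred and equals `y + (c/√n)w`, hence `‖y‖ ≤ ‖u‖ + (|c|/√n)‖w‖`, while
`‖Sx‖² = ‖S̄u‖² + c² ≥ λ²‖u‖² + c²`. An elementary inequality between `‖u‖`, `‖y‖` and `|c|/√n`
then gives the bound, and a positive lower bound on `‖Sx‖` forces `S` to be injective.
-/

open Matrix

/-- The Euclidean norm of a vector in `ℝⁿ`. -/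
noncomputable def evNorm {n : ℕ} (v : Fin n → ℝ) : ℝ := Real.sqrt (∑ i, v i ^ 2)

section evNorm

variable {n : ℕ}

lemma evNorm_eq_norm_toLp (v : Fin n → ℝ) : evNorm v = ‖WithLp.toLp 2 v‖ := by
  simp [evNorm, EuclideanSpace.norm_eq]

lemma evNorm_nonneg (v : Fin n → ℝ) : 0 ≤ evNorm v := Real.sqrt_nonneg _

lemma evNorm_sq (v : Fin n → ℝ) : evNorm v ^ 2 = ∑ i, v i ^ 2 :=
  Real.sq_sqrt (Finset.sum_nonneg fun _ _ => sq_nonneg _)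

lemma evNorm_sub_le (u v : Fin n → ℝ) : evNorm (u - v) ≤ evNorm u + evNorm v := by
  simpa only [evNorm_eq_norm_toLp, WithLp.toLp_sub] using norm_sub_le _ _

lemma evNorm_smul (s : ℝ) (v : Fin n → ℝ) : evNorm (s • v) = |s| * evNorm v := by
  simp only [evNorm_eq_norm_toLp, WithLp.toLp_smul, norm_smul, Real.norm_eq_abs]

lemma evNorm_pos {v : Fin n → ℝ} (hv : v ≠ 0) : 0 < evNorm v := by
  rw [evNorm_eq_norm_toLp, norm_pos_iff]
  exact fun h => hv (congrArg WithLp.ofLp h)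

lemma evNorm_add_const_sq {y : Fin n → ℝ} (hy : ∑ i, y i = 0) (a : ℝ) :
    evNorm (y + fun _ => a) ^ 2 = evNorm y ^ 2 + n * a ^ 2 := by
  simp only [evNorm_sq, Pi.add_apply, add_sq, Finset.sum_add_distrib, ← Finset.sum_mul,
    ← Finset.mul_sum, hy, Finset.sum_const, Finset.card_univ, Fintype.card_fin, nsmul_eq_mul]
  ring

end evNorm

lemma Matrix.isUnit_of_evNorm_mulVec_sq_ge {n : ℕ} {A : Matrix (Fin n) (Fin n) ℝ} {C : ℝ}
    (hC : 0 < C) (hA : ∀ x, evNorm (A *ᵥ x) ^ 2 ≥ C * evNorm x ^ 2) : IsUnit A := by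
  rw [isUnit_iff_isUnit_det, isUnit_iff_ne_zero]
  intro hdet
  obtain ⟨v, hv, hAv⟩ := exists_mulVec_eq_zero_iff.2 hdet
  have hAv' := hA v
  rw [hAv, evNorm_eq_norm_toLp 0, WithLp.toLp_zero, norm_zero] at hAv'
  nlinarith [mul_pos hC (pow_pos (evNorm_pos hv) 2)]

lemma min_half_inv_mul_add_sq_le {a b t r : ℝ} (hb : 0 ≤ b) (h : b ≤ a + t * r) :
    min (1 / 2) (1 / (16 * r ^ 2 + 1)) * (b ^ 2 + t ^ 2) ≤ a ^ 2 + t ^ 2 := by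
  set K := min (1 / 2 : ℝ) (1 / (16 * r ^ 2 + 1))
  have hK0 : 0 ≤ K := le_min (by norm_num) (by positivity)
  have hK1 : K ≤ 1 / 2 := min_le_left _ _
  have hK2 : K * (16 * r ^ 2 + 1) ≤ 1 := (le_div_iff₀ (by positivity)).1 (min_le_right _ _)
  have hb2 : b ^ 2 ≤ 2 * a ^ 2 + 2 * r ^ 2 * t ^ 2 := by
    nlinarith [sq_nonneg (a - t * r)]
  -- `2K ≤ 1` and `(2r² + 1)K ≤ 1`
  nlinarith [mul_nonneg hK0 (sq_nonneg r), sq_nonneg a, sq_nonneg t]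

section centering

variable {n : ℕ} (π : Fin n → ℝ)

def centering : Matrix (Fin n) (Fin n) ℝ := 1 - Matrix.of fun i _ => π i

lemma centering_mulVec_apply (v : Fin n → ℝ) (i : Fin n) :
    (centering π *ᵥ v) i = v i - π i * ∑ j, v j := by
  rw [centering, sub_mulVec, one_mulVec]
  simp [mulVec, dotProduct, Finset.mul_sum]

lemma centering_mulVec_of_sum_eq_zero {v : Fin n → ℝ} (hv : ∑ i, v i = 0) :
    centering π *ᵥ v = v := by
  ext i
  simp [centering_mulVec_apply, hv]

lemma exists_evNorm_sq_eq_and_centering_mulVec_eq (hn : n ≠ 0) (x : Fin n → ℝ) :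
    ∃ y : Fin n → ℝ, evNorm x ^ 2 = evNorm y ^ 2 + ((∑ i, x i) / √n) ^ 2 ∧
      centering π *ᵥ x = y + ((∑ i, x i) / √n) • (centering π *ᵥ fun _ => 1 / √n) := by
  set s := (∑ i, x i) / √n
  have hn' : (0 : ℝ) < n := by positivity
  have hsum : ∑ i, x i = n * (s / √n) := by
    rw [div_div, Real.mul_self_sqrt hn'.le, mul_div_cancel₀ _ hn'.ne']
  set y : Fin n → ℝ := x - fun _ => s / √n
  have hy : ∑ i, y i = 0 := by
    simp [y, Finset.sum_sub_distrib, hsum]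
  have hx : x = y + fun _ => s / √n := by simp [y]
  refine ⟨y, ?_, ?_⟩
  · rw [hx, evNorm_add_const_sq hy, div_pow, Real.sq_sqrt hn'.le, mul_div_cancel₀ _ hn'.ne']
  · have hconst : (fun _ => s / √n : Fin n → ℝ) = s • fun _ => 1 / √n := by
      ext; simp [div_eq_mul_inv]
    rw [← mulVec_smul, ← hconst, hx, mulVec_add, centering_mulVec_of_sum_eq_zero π hy]

variable {π}

lemma sum_centering_mulVec (hπ : ∑ i, π i = 1) (v : Fin n → ℝ) :
    ∑ i, (centering π *ᵥ v) i = 0 := by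
  simp only [centering_mulVec_apply, Finset.sum_sub_distrib, ← Finset.sum_mul, hπ, one_mul,
    sub_self]

end centering

def withOnesRow {n : ℕ} (A : Matrix (Fin (n - 1)) (Fin n) ℝ) : Matrix (Fin n) (Fin n) ℝ :=
  Matrix.of fun i j => if h : (i : ℕ) < n - 1 then A ⟨i, h⟩ j else 1

lemma evNorm_withOnesRow_mulVec_sq {n : ℕ} (A : Matrix (Fin (n - 1)) (Fin n) ℝ)
    (x : Fin n → ℝ) :
    evNorm (withOnesRow A *ᵥ x) ^ 2 = evNorm (A *ᵥ x) ^ 2 + (∑ i, x i) ^ 2 := by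
  cases n with
  | zero => simp [evNorm]
  | succ m =>
    have hrow (i : Fin m) : (withOnesRow A *ᵥ x) i.castSucc = (A *ᵥ x) i := by
      simp [withOnesRow, mulVec, dotProduct]
    have hlast : (withOnesRow A *ᵥ x) (Fin.last m) = ∑ i, x i := by
      simp [withOnesRow, mulVec, dotProduct]
    simp only [evNorm_sq, Fin.sum_univ_castSucc, hrow, hlast]
    -- `Fin (m + 1 - 1)` and `Fin m` agree definitionally
    rfl

lemma evNorm_withOnesRow_mul_centering_mulVec_sq_ge {n : ℕ} (hn : n ≠ 0) {π : Fin n → ℝ}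
    (hπ : ∑ i, π i = 1) {lam : ℝ} (hlam : 0 ≤ lam) {Sbar : Matrix (Fin (n - 1)) (Fin n) ℝ}
    (hSbar : ∀ x : Fin n → ℝ, ∑ i, x i = 0 → evNorm (Sbar *ᵥ x) ≥ lam * evNorm x)
    (x : Fin n → ℝ) :
    evNorm (withOnesRow (Sbar * centering π) *ᵥ x) ^ 2 ≥ min (n : ℝ) (lam ^ 2) *
      min (1 / 2) (1 / (16 * evNorm (centering π *ᵥ fun _ => 1 / √n) ^ 2 + 1)) * evNorm x ^ 2 := by
  obtain ⟨y, hx, hu⟩ := exists_evNorm_sq_eq_and_centering_mulVec_eq π hn x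
  set w := centering π *ᵥ fun _ => 1 / √n
  set u := centering π *ᵥ x
  set s := (∑ i, x i) / √n
  have hn' : (0 : ℝ) < n := by positivity
  have hSx : evNorm (withOnesRow (Sbar * centering π) *ᵥ x) ^ 2
      = evNorm (Sbar *ᵥ u) ^ 2 + n * s ^ 2 := by
    rw [evNorm_withOnesRow_mulVec_sq, ← mulVec_mulVec, div_pow, Real.sq_sqrt hn'.le,
      mul_div_cancel₀ _ hn'.ne']
  have hy : evNorm y ≤ evNorm u + |s| * evNorm w := by
    rw [← evNorm_smul, show y = u - s • w by rw [hu]; abel]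
    exact evNorm_sub_le _ _
  have hK := min_half_inv_mul_add_sq_le (evNorm_nonneg y) hy
  rw [sq_abs] at hK
  have hM : 0 ≤ min (n : ℝ) (lam ^ 2) := le_min hn'.le (sq_nonneg lam)
  rw [hx, hSx, ge_iff_le]
  calc min (n : ℝ) (lam ^ 2) * min (1 / 2) (1 / (16 * evNorm w ^ 2 + 1)) * (evNorm y ^ 2 + s ^ 2)
      ≤ min (n : ℝ) (lam ^ 2) * (evNorm u ^ 2 + s ^ 2) := by
        rw [mul_assoc]
        exact mul_le_mul_of_nonneg_left hK hM
    _ ≤ lam ^ 2 * evNorm u ^ 2 + n * s ^ 2 := by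
        nlinarith [min_le_left (n : ℝ) (lam ^ 2), min_le_right (n : ℝ) (lam ^ 2),
          sq_nonneg (evNorm u), sq_nonneg s]
    _ ≤ evNorm (Sbar *ᵥ u) ^ 2 + n * s ^ 2 := by
        gcongr
        rw [← mul_pow]
        exact pow_le_pow_left₀ (mul_nonneg hlam (evNorm_nonneg u)) (hSbar u
          (sum_centering_mulVec hπ x)) 2

theorem claim5_singular_values_bounded_below {n : ℕ} (hn : 2 ≤ n)
    (π : Fin n → ℝ) (hπ : ∑ i, π i = 1) (lam : ℝ) (hlam : 0 < lam)
    (Sbar : Matrix (Fin (n - 1)) (Fin n) ℝ)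
    (hSbar : ∀ x : Fin n → ℝ, ∑ i, x i = 0 → evNorm (Sbar *ᵥ x) ≥ lam * evNorm x) :
    let w : Fin n → ℝ :=
      ((1 - Matrix.of fun i _ => π i : Matrix (Fin n) (Fin n) ℝ)) *ᵥ
        (fun _ => 1 / Real.sqrt n)
    let S : Matrix (Fin n) (Fin n) ℝ := Matrix.of fun i j =>
      if h : (i : ℕ) < n - 1 then
        ((Sbar * (1 - Matrix.of fun i' _ => π i') :
          Matrix (Fin (n - 1)) (Fin n) ℝ) ⟨i, h⟩ j)
      else 1
    (∀ x : Fin n → ℝ,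
      evNorm (S *ᵥ x) ^ 2
        ≥ min (n : ℝ) (lam ^ 2) * min (1 / 2) (1 / (16 * evNorm w ^ 2 + 1))
          * evNorm x ^ 2) ∧ IsUnit S := by
  intro w S
  have hn₀ : n ≠ 0 := by omega
  have bound := evNorm_withOnesRow_mul_centering_mulVec_sq_ge hn₀ hπ hlam.le hSbar
  have hC : 0 < min (n : ℝ) (lam ^ 2) * min (1 / 2) (1 / (16 * evNorm w ^ 2 + 1)) :=
    mul_pos (lt_min (by positivity) (by positivity)) (lt_min (by norm_num) (by positivity))
  exact ⟨bound, isUnit_of_evNorm_mulVec_sq_ge hC bound⟩
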